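/- Let a, b, c be integers, and let G be the group presented with generators x, y, z, h and relators x h x⁻¹ h⁻¹, y h y⁻¹ h⁻¹, z h z⁻¹ h⁻¹, x^a h, y^b h, z^c h, x y z. Then the quotient of G by the normal closure of the image of the generator h is isomorphic to the triangle group Δ(|a|,|b|,|c|), presented with generators x, y, z and relators x^{|a|}, y^{|b|}, z^{|c|}, x y z. -/

import Mathlib

/-!
Killing the fiber `h` turns the relators `x^a h, y^b h, z^c h` into `x^a, y^b, z^c` and the
commutators with `h` into trivial relators, and `x^a = 1` holds exactly when `x^|a| = 1`.
Hence `x, y, z, h ↦ x, y, z, 1` and `x, y, z ↦ x, y, z` are mutually inverse homomorphisms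
between `π₁ ⧸ ⟨⟨h⟩⟩` and `Δ(|a|, |b|, |c|)`.
-/

/-- Relators of the fundamental-group presentation of a Seifert fibered space over `S²`
with three exceptional fibers of indices `a, b, c`: generators `x = of 0`, `y = of 1`,
`z = of 2`, `h = of 3`, relators `xhx⁻¹h⁻¹, yhy⁻¹h⁻¹, zhz⁻¹h⁻¹, x^a h, y^b h, z^c h, xyz`. -/
def seifertRels (a b c : ℤ) : Set (FreeGroup (Fin 4)) :=
  { FreeGroup.of 0 * FreeGroup.of 3 * (FreeGroup.of 0)⁻¹ * (FreeGroup.of 3)⁻¹,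
    FreeGroup.of 1 * FreeGroup.of 3 * (FreeGroup.of 1)⁻¹ * (FreeGroup.of 3)⁻¹,
    FreeGroup.of 2 * FreeGroup.of 3 * (FreeGroup.of 2)⁻¹ * (FreeGroup.of 3)⁻¹,
    FreeGroup.of 0 ^ a * FreeGroup.of 3,
    FreeGroup.of 1 ^ b * FreeGroup.of 3,
    FreeGroup.of 2 ^ c * FreeGroup.of 3,
    FreeGroup.of 0 * FreeGroup.of 1 * FreeGroup.of 2 }

/-- Relators of the triangle group Δ(p,q,r): generators `x = of 0`, `y = of 1`, `z = of 2`,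
relators `x^p, y^q, z^r, xyz`. -/
def triangleRels (p q r : ℕ) : Set (FreeGroup (Fin 3)) :=
  { FreeGroup.of 0 ^ p, FreeGroup.of 1 ^ q, FreeGroup.of 2 ^ r,
    FreeGroup.of 0 * FreeGroup.of 1 * FreeGroup.of 2 }

namespace PresentedGroup

variable {α : Type*} {rels : Set (FreeGroup α)}

theorem of_pow_eq_one {i : α} {n : ℕ} (h : FreeGroup.of i ^ n ∈ rels) :
    (of i : PresentedGroup rels) ^ n = 1 :=
  (map_pow _ _ _).symm.trans (one_of_mem h)

theorem of_mul_of_mul_of_eq_one {i j k : α}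
    (h : FreeGroup.of i * FreeGroup.of j * FreeGroup.of k ∈ rels) :
    (of i * of j * of k : PresentedGroup rels) = 1 :=
  one_of_mem h

theorem of_zpow_mem_normalClosure_of {i j : α} {n : ℤ}
    (h : FreeGroup.of i ^ n * FreeGroup.of j ∈ rels) :
    (of i : PresentedGroup rels) ^ n ∈ Subgroup.normalClosure {of j} := by
  have hrel : (of i : PresentedGroup rels) ^ n * of j = 1 := by
    rw [← one_of_mem h, map_mul, map_zpow]
    rfl
  rw [eq_inv_of_mul_eq_one_left hrel]
  exact inv_mem (Subgroup.subset_normalClosure rfl)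

end PresentedGroup

open PresentedGroup

section

variable (a b c : ℤ)

local notation "π" => PresentedGroup (seifertRels a b c)
local notation "N" => Subgroup.normalClosure ({of 3} : Set (PresentedGroup (seifertRels a b c)))
local notation "Δ" => PresentedGroup (triangleRels a.natAbs b.natAbs c.natAbs)

def seifertToTriangle : π →* Δ :=
  toGroup (f := ![of 0, of 1, of 2, 1]) <| by
    have hx : (of 0 : Δ) ^ a = 1 := pow_natAbs_eq_one.mp (of_pow_eq_one (by simp [triangleRels]))
    have hy : (of 1 : Δ) ^ b = 1 := pow_natAbs_eq_one.mp (of_pow_eq_one (by simp [triangleRels]))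
    have hz : (of 2 : Δ) ^ c = 1 := pow_natAbs_eq_one.mp (of_pow_eq_one (by simp [triangleRels]))
    have hxyz : (of 0 * of 1 * of 2 : Δ) = 1 := of_mul_of_mul_of_eq_one (by simp [triangleRels])
    simp only [seifertRels, Set.mem_insert_iff, Set.mem_singleton_iff]
    rintro r (rfl | rfl | rfl | rfl | rfl | rfl | rfl) <;> simp [map_zpow, hx, hy, hz, hxyz]

theorem normalClosure_of_three_le_ker_seifertToTriangle : N ≤ (seifertToTriangle a b c).ker :=
  Subgroup.normalClosure_le_normal <| Set.singleton_subset_iff.mpr <| toGroup.of _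

def triangleToSeifertModFiber : Δ →* π ⧸ N :=
  toGroup (f := ![((of 0 : π) : π ⧸ N), (of 1 : π), (of 2 : π)]) <| by
    have hpow {i : Fin 4} {n : ℤ}
        (h : FreeGroup.of i ^ n * FreeGroup.of 3 ∈ seifertRels a b c) :
        ((of i : π) : π ⧸ N) ^ n.natAbs = 1 := by
      rw [pow_natAbs_eq_one, ← QuotientGroup.mk_zpow, QuotientGroup.eq_one_iff]
      exact of_zpow_mem_normalClosure_of h
    have hx : ((of 0 : π) : π ⧸ N) ^ a.natAbs = 1 := hpow (by simp [seifertRels])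
    have hy : ((of 1 : π) : π ⧸ N) ^ b.natAbs = 1 := hpow (by simp [seifertRels])
    have hz : ((of 2 : π) : π ⧸ N) ^ c.natAbs = 1 := hpow (by simp [seifertRels])
    have hxyz : ((of 0 : π) : π ⧸ N) * (of 1 : π) * (of 2 : π) = 1 := by
      rw [← QuotientGroup.mk_mul, ← QuotientGroup.mk_mul,
        of_mul_of_mul_of_eq_one (by simp [seifertRels]), QuotientGroup.mk_one]
    simp only [triangleRels, Set.mem_insert_iff, Set.mem_singleton_iff]
    rintro r (rfl | rfl | rfl | rfl) <;> simp [hx, hy, hz, hxyz]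

def seifertModFiberEquivTriangle : π ⧸ N ≃* Δ :=
  MonoidHom.toMulEquiv
    (QuotientGroup.lift N (seifertToTriangle a b c)
      (normalClosure_of_three_le_ker_seifertToTriangle a b c))
    (triangleToSeifertModFiber a b c)
    (QuotientGroup.monoidHom_ext N <| PresentedGroup.ext fun i => by
      have hh : ((of 3 : π) : π ⧸ N) = 1 :=
        (QuotientGroup.eq_one_iff _).mpr (Subgroup.subset_normalClosure rfl)
      fin_cases i <;> simp [seifertToTriangle, triangleToSeifertModFiber, hh])
    (PresentedGroup.ext fun i => by
      fin_cases i <;> simp [seifertToTriangle, triangleToSeifertModFiber])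

end

theorem seifert_mod_fiber_iso_triangle (a b c : ℤ) :
    Nonempty ((PresentedGroup (seifertRels a b c) ⧸
        Subgroup.normalClosure ({PresentedGroup.of 3} :
          Set (PresentedGroup (seifertRels a b c)))) ≃*
      PresentedGroup (triangleRels a.natAbs b.natAbs c.natAbs)) :=
  ⟨seifertModFiberEquivTriangle a b c⟩
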